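/- arXiv:1701.00097 — 4 statements merged into one kernel-verified Lean document; each statement's English description precedes it below -/
import Mathlib

section
/- (Lemma 2.1) Let $\omega$ be a 3-cocycle of $G$ with values in $S^1$ and let $a \in G$. Define $\varphi_a : G_a \times G_a \to S^1$ by $\varphi_a(g,h) = \overline{\omega}(a,g,h)\,\omega(g,a,h)\,\overline{\omega}(g,h,a)$, where $G_a$ is the centralizer of $a$ in $G$. Then $\varphi_a$ is a 2-cocycle of $G_a$, i.e., $\varphi_a(h_2,h_3)\,\varphi_a(h_1,h_2h_3) = \varphi_a(h_1h_2,h_3)\,\varphi_a(h_1,h_2)$ for all $h_1,h_2,h_3 \in G_a$. -/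
/-- `φₐ(g,h) = ω̄(a,g,h) ω(g,a,h) ω̄(g,h,a)`. -/
noncomputable def phiA {G : Type*} [Group G] (ω : G → G → G → Circle) (a g h : G) : Circle :=
  (ω a g h)⁻¹ * ω g a h * (ω g h a)⁻¹

/-!
The function `φₐ` is the slant product of `ω` along `a`. Its 2-coboundary at `(h₁, h₂, h₃)` is
the alternating product of the 3-cocycle identities of `ω` at the four ways of inserting `a` into
`(h₁, h₂, h₃)`, once the products `hᵢ a` and `a hᵢ` are identified.
-/

theorem slant_cocycle_of_commute {G M : Type*} [Group G] [CommGroup M] (ω : G → G → G → M)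
    (hω : ∀ g1 g2 g3 g4 : G,
      ω g1 g2 g3 * ω g1 (g2 * g3) g4 * ω g2 g3 g4 =
        ω (g1 * g2) g3 g4 * ω g1 g2 (g3 * g4))
    (a : G) (φ : G → G → M) (hφ : ∀ g h, φ g h = (ω a g h)⁻¹ * ω g a h * (ω g h a)⁻¹)
    (h1 h2 h3 : G) (c1 : h1 * a = a * h1) (c2 : h2 * a = a * h2) (c3 : h3 * a = a * h3) :
    φ h2 h3 * φ h1 (h2 * h3) = φ (h1 * h2) h3 * φ h1 h2 := by
  have cocycle_a123 := hω a h1 h2 h3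
  have cocycle_1a23 := hω h1 a h2 h3
  have cocycle_12a3 := hω h1 h2 a h3
  have cocycle_123a := hω h1 h2 h3 a
  rw [← c1] at cocycle_a123
  rw [← c2] at cocycle_1a23
  rw [← c3] at cocycle_12a3
  simp only [hφ]
  -- `linear_combination` combines equations additively, so we pass to `Additive M`.
  apply Additive.ofMul.injective
  apply_fun Additive.ofMul at cocycle_a123 cocycle_1a23 cocycle_12a3 cocycle_123a
  simp only [ofMul_mul, ofMul_inv] at cocycle_a123 cocycle_1a23 cocycle_12a3 cocycle_123a ⊢
  linear_combination (norm := abel) cocycle_a123 - cocycle_1a23 + cocycle_12a3 - cocycle_123a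

/-- Lemma 2.1: for a 3-cocycle `ω` and `a ∈ G`, the function `φₐ` is a 2-cocycle
on the centralizer of `a`. -/
theorem stmt_2 {G : Type*} [Group G] (ω : G → G → G → Circle)
    (hω : ∀ g1 g2 g3 g4 : G,
      ω g1 g2 g3 * ω g1 (g2 * g3) g4 * ω g2 g3 g4 =
        ω (g1 * g2) g3 g4 * ω g1 g2 (g3 * g4))
    (a : G) (h1 h2 h3 : G)
    (c1 : h1 * a = a * h1) (c2 : h2 * a = a * h2) (c3 : h3 * a = a * h3) :
    phiA ω a h2 h3 * phiA ω a h1 (h2 * h3) =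
      phiA ω a (h1 * h2) h3 * phiA ω a h1 h2 :=
  slant_cocycle_of_commute ω hω a (phiA ω a) (fun _ _ => rfl) h1 h2 h3 c1 c2 c3
end

section
/- (Proposition 2.2, special case $x=y=z$) Let $\omega$ be a 3-cocycle of $G$, $a \in G$, and $\varphi_a(g,h) = \overline{\omega}(a,g,h)\,\omega(g,a,h)\,\overline{\omega}(g,h,a)$ the associated 2-cocycle on the centralizer $G_a$. For any $x \in G$, the 2-cocycle $(g,h) \mapsto \varphi_{xax^{-1}}(xgx^{-1}, xhx^{-1})$ on $G_a$ is coboundarily equivalent to $\varphi_a$, i.e., there exists $\gamma : G_a \to S^1$ such that $\varphi_{xax^{-1}}(xgx^{-1},xhx^{-1}) = \gamma(g)\,\gamma(h)\,\overline{\gamma}(gh)\,\varphi_a(g,h)$ for all $g,h \in G_a$. -/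
namespace GroupCohomology

variable {G M : Type*} [Group G] [AddCommGroup M]

def IsThreeCocycle (ω : G → G → G → M) : Prop :=
  ∀ g₁ g₂ g₃ g₄ : G,
    ω g₁ g₂ g₃ + ω g₁ (g₂ * g₃) g₄ + ω g₂ g₃ g₄ = ω (g₁ * g₂) g₃ g₄ + ω g₁ g₂ (g₃ * g₄)

def transgression (ω : G → G → G → M) (b p q : G) : M :=
  ω b p q - ω p (p⁻¹ * b * p) q + ω p q ((p * q)⁻¹ * b * (p * q))

theorem transgression_add_transgression {ω : G → G → G → M} (hω : IsThreeCocycle ω)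
    (b p q r : G) :
    transgression ω b p q + transgression ω b (p * q) r =
      transgression ω b p (q * r) + transgression ω (p⁻¹ * b * p) q r := by
  have A := hω b p q r
  have B := hω p (p⁻¹ * b * p) q r
  have C := hω p q ((p * q)⁻¹ * b * (p * q)) r
  have D := hω p q r ((p * q * r)⁻¹ * b * (p * q * r))
  simp only [transgression, mul_assoc, mul_inv_rev, mul_inv_cancel_left] at A B C D ⊢
  linear_combination (norm := abel) A - B + C - D

theorem exists_transgression_conj_eq {ω : G → G → G → M} (hω : IsThreeCocycle ω) (a x : G) :
    ∃ γ : G → M, ∀ g h : G, Commute g a →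
      transgression ω (x * a * x⁻¹) (x * g * x⁻¹) (x * h * x⁻¹) =
        γ g + γ h - γ (g * h) + transgression ω a g h := by
  set b := x * a * x⁻¹
  refine ⟨fun g => transgression ω b (x * g * x⁻¹) x - transgression ω b x g, ?_⟩
  intro g h hg
  dsimp only
  have hb : (x * g * x⁻¹)⁻¹ * b * (x * g * x⁻¹) = b := (hg.conj x).inv_mul_cancel
  have S1 := transgression_add_transgression hω b x g h
  have S2 := transgression_add_transgression hω b (x * g * x⁻¹) x h
  have S3 := transgression_add_transgression hω b (x * g * x⁻¹) (x * h * x⁻¹) x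
  rw [show x⁻¹ * b * x = a by simp only [b]; group] at S1
  rw [show x * g * x⁻¹ * x = x * g by group, hb] at S2
  rw [show x * g * x⁻¹ * (x * h * x⁻¹) = x * (g * h) * x⁻¹ by group,
    show x * h * x⁻¹ * x = x * h by group, hb] at S3
  linear_combination (norm := abel) S3 - S2 + S1

end GroupCohomology

open GroupCohomology

theorem isThreeCocycle_ofMul {G M : Type*} [Group G] [CommGroup M] {ω : G → G → G → M}
    (hω : ∀ g1 g2 g3 g4 : G,
      ω g1 g2 g3 * ω g1 (g2 * g3) g4 * ω g2 g3 g4 =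
        ω (g1 * g2) g3 g4 * ω g1 g2 (g3 * g4)) :
    IsThreeCocycle fun p q r => Additive.ofMul (ω p q r) := fun g1 g2 g3 g4 => by
  simpa only [ofMul_mul] using congrArg Additive.ofMul (hω g1 g2 g3 g4)

theorem ofMul_phiA {G : Type*} [Group G] (ω : G → G → G → Circle) {a g h : G}
    (hg : Commute g a) (hh : Commute h a) :
    Additive.ofMul (phiA ω a g h) = -transgression (fun p q r => Additive.ofMul (ω p q r)) a g h := by
  simp only [phiA, transgression, ofMul_mul, ofMul_inv, hg.inv_mul_cancel,
    (hg.mul_left hh).inv_mul_cancel]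
  abel

/-- Proposition 2.2 (special case `x = y = z`): the 2-cocycle
`(g,h) ↦ φ_{xax⁻¹}(xgx⁻¹, xhx⁻¹)` on the centralizer of `a` is coboundarily
equivalent to `φₐ`. -/
theorem stmt_3 {G : Type*} [Group G] (ω : G → G → G → Circle)
    (hω : ∀ g1 g2 g3 g4 : G,
      ω g1 g2 g3 * ω g1 (g2 * g3) g4 * ω g2 g3 g4 =
        ω (g1 * g2) g3 g4 * ω g1 g2 (g3 * g4))
    (a x : G) :
    ∃ γ : G → Circle, ∀ g h : G, g * a = a * g → h * a = a * h →
      phiA ω (x * a * x⁻¹) (x * g * x⁻¹) (x * h * x⁻¹) =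
        γ g * γ h * (γ (g * h))⁻¹ * phiA ω a g h := by
  obtain ⟨γ, hγ⟩ := exists_transgression_conj_eq (isThreeCocycle_ofMul hω) a x
  refine ⟨fun g => Additive.toMul (-γ g), fun g h (hg : Commute g a) (hh : Commute h a) =>
    Additive.ofMul.injective ?_⟩
  simp only [ofMul_mul, ofMul_inv, ofMul_toMul, ofMul_phiA ω hg hh,
    ofMul_phiA ω (hg.conj x) (hh.conj x), hγ g h hg]
  abel
end

section
/- (Lemma 4.1) Let $G$ be a group generated by subgroups $H$ and $K$, and let $\omega$ be a normalized 3-cocycle of $G$ with values in $S^1$ satisfying $\omega|_{H\times H\times H} \equiv 1$ and $\omega|_{K\times K\times K} \equiv 1$. Then $\omega$ is coboundarily equivalent, via a normalized 2-cochain $\varphi$ with $\partial\varphi$ trivial on $H^3$ and on $K^3$, to a normalized 3-cocycle $\omega'$ that still satisfies $\omega'|_{H^3} \equiv 1 \equiv \omega'|_{K^3}$ and additionally $\omega'(g, l, l^{-1}) = 1 = \omega'(l^{-1}, l, g)$ for all $g \in G$ and $l \in H \cup K$. -/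
/-!
Write `S = H ∪ K`. Two successive twists by explicit normalized 2-cochains vanishing on `H × H`
and `K × K` do the job; square roots in `S¹` make all choices canonical.

The cocycle identity at `(l, l⁻¹, l, g)` gives `ω(l, l⁻¹, lg) = ω(l⁻¹, l, g)` for `l ∈ S`, so
`φ₁(l, g) = ω(l⁻¹, l, g)^{-1/2}` for `l ∈ S` (and `φ₁ = 1` elsewhere) kills `ω(l⁻¹, l, g)`.

Next let `c(g, l) = ω(g, l, l⁻¹)`. The identity at `(g, l, l⁻¹, l)` gives `c(gl, l⁻¹) = c(g, l)`
for `l ∈ S`, and one needs `φ₂(g, l) φ₂(gl, l⁻¹) = c(g, l)` for `l ∈ S`, while `φ₂(l, g) = 1`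
for `l ∈ S` keeps the first normalization. These demands never clash: if `g, l, gl` all lie in
`S`, two of them lie in the same subgroup, hence so does the third, and then `c(g, l) = 1`.
So for `l ∈ S`, `g ∉ S` one takes `φ₂(g, l) = c(g, l)` if `gl ∈ S` and `c(g, l)^{1/2}` if not.
-/

/-- The coboundary of a 2-cochain `φ`. -/
noncomputable def coboundary2 {G : Type*} [Group G] (φ : G → G → Circle) (g1 g2 g3 : G) :
    Circle :=
  φ g2 g3 * (φ (g1 * g2) g3)⁻¹ * φ g1 (g2 * g3) * (φ g1 g2)⁻¹

noncomputable def circleSqrt (z : Circle) : Circle := Circle.exp (Complex.arg z / 2)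

lemma circleSqrt_mul_self (z : Circle) : circleSqrt z * circleSqrt z = z := by
  rw [circleSqrt, ← Circle.exp_add, add_halves, Circle.exp_arg]

@[simp]
lemma circleSqrt_one : circleSqrt 1 = 1 := by
  simp [circleSqrt]

section Cochains

variable {G : Type*} [Group G]

def IsCocycle3 (ω : G → G → G → Circle) : Prop :=
  ∀ g1 g2 g3 g4 : G,
    ω g1 g2 g3 * ω g1 (g2 * g3) g4 * ω g2 g3 g4 = ω (g1 * g2) g3 g4 * ω g1 g2 (g3 * g4)

def IsNormalized3 (ω : G → G → G → Circle) : Prop :=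
  ∀ g1 g2 g3 : G, (g1 = 1 ∨ g2 = 1 ∨ g3 = 1) → ω g1 g2 g3 = 1

def IsTrivialOn3 (ω : G → G → G → Circle) (H : Subgroup G) : Prop :=
  ∀ a b c : G, a ∈ H → b ∈ H → c ∈ H → ω a b c = 1

def IsNormalized2 (φ : G → G → Circle) : Prop :=
  ∀ g : G, φ g 1 = 1 ∧ φ 1 g = 1

def IsTrivialOn2 (φ : G → G → Circle) (H : Subgroup G) : Prop :=
  ∀ a b : G, a ∈ H → b ∈ H → φ a b = 1

noncomputable def twist (φ : G → G → Circle) (ω : G → G → G → Circle) (a b c : G) : Circle :=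
  coboundary2 φ a b c * ω a b c

lemma isCocycle3_twist {ω : G → G → G → Circle} (hω : IsCocycle3 ω) (φ : G → G → Circle) :
    IsCocycle3 (twist φ ω) := by
  intro g1 g2 g3 g4
  have h := congrArg Additive.ofMul (hω g1 g2 g3 g4)
  apply Additive.ofMul.injective
  simp only [twist, coboundary2, ofMul_mul, ofMul_inv, mul_assoc] at h ⊢
  linear_combination (norm := abel) h

lemma IsNormalized2.coboundary2_eq_one {φ : G → G → Circle} (hφ : IsNormalized2 φ)
    {g1 g2 g3 : G} (h : g1 = 1 ∨ g2 = 1 ∨ g3 = 1) : coboundary2 φ g1 g2 g3 = 1 := by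
  rcases h with rfl | rfl | rfl <;> simp [coboundary2, (hφ _).1, (hφ _).2]

lemma IsTrivialOn2.coboundary2_eq_one {φ : G → G → Circle} {H : Subgroup G}
    (hφ : IsTrivialOn2 φ H) : IsTrivialOn3 (coboundary2 φ) H := by
  intro a b c ha hb hc
  simp [coboundary2, hφ _ _ ha hb, hφ _ _ hb hc, hφ _ _ (mul_mem ha hb) hc,
    hφ _ _ ha (mul_mem hb hc)]

lemma isNormalized3_twist {φ : G → G → Circle} {ω : G → G → G → Circle}
    (hφ : IsNormalized2 φ) (hω : IsNormalized3 ω) : IsNormalized3 (twist φ ω) := by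
  intro g1 g2 g3 h
  rw [twist, hφ.coboundary2_eq_one h, hω _ _ _ h, one_mul]

lemma isTrivialOn3_twist {φ : G → G → Circle} {ω : G → G → G → Circle} {H : Subgroup G}
    (hφ : IsTrivialOn2 φ H) (hω : IsTrivialOn3 ω H) : IsTrivialOn3 (twist φ ω) H := by
  intro a b c ha hb hc
  rw [twist, hφ.coboundary2_eq_one a b c ha hb hc, hω a b c ha hb hc, one_mul]

lemma IsNormalized2.mul {φ ψ : G → G → Circle} (hφ : IsNormalized2 φ)
    (hψ : IsNormalized2 ψ) : IsNormalized2 (φ * ψ) := fun g => by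
  simp [(hφ g).1, (hφ g).2, (hψ g).1, (hψ g).2]

lemma IsTrivialOn2.mul {φ ψ : G → G → Circle} {H : Subgroup G} (hφ : IsTrivialOn2 φ H)
    (hψ : IsTrivialOn2 ψ H) : IsTrivialOn2 (φ * ψ) H := fun a b ha hb => by
  simp [hφ a b ha hb, hψ a b ha hb]

lemma twist_mul (φ ψ : G → G → Circle) (ω : G → G → G → Circle) :
    twist (φ * ψ) ω = twist ψ (twist φ ω) := by
  funext a b c
  apply Additive.ofMul.injective
  simp only [twist, coboundary2, Pi.mul_apply, ofMul_mul, ofMul_inv]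
  abel

lemma IsCocycle3.mul_inv_left_eq {ω : G → G → G → Circle} (hω : IsCocycle3 ω) (hn : IsNormalized3 ω) (l g : G) :
    ω l l⁻¹ (l * g) = ω l l⁻¹ l * ω l⁻¹ l g := by
  have h := hω l l⁻¹ l g
  rwa [inv_mul_cancel, mul_inv_cancel, hn l 1 g (by simp), hn 1 l g (by simp), mul_one,
    one_mul, eq_comm] at h

lemma IsCocycle3.mul_inv_right_eq {ω : G → G → G → Circle} (hω : IsCocycle3 ω) (hn : IsNormalized3 ω) (g l : G) :
    ω (g * l) l⁻¹ l = ω g l l⁻¹ * ω l l⁻¹ l := by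
  have h := hω g l l⁻¹ l
  rwa [inv_mul_cancel, mul_inv_cancel, hn g 1 l (by simp), hn g l 1 (by simp), mul_one,
    mul_one, eq_comm] at h

end Cochains

section Corrections

variable {G : Type*} [Group G] (H K : Subgroup G) (ω : G → G → G → Circle)

lemma mem_and_mem_of_mul_mem {x y : G} (hx : x ∈ H ∨ x ∈ K) (hy : y ∈ H ∨ y ∈ K)
    (hxy : x * y ∈ H ∨ x * y ∈ K) : (x ∈ H ∧ y ∈ H) ∨ (x ∈ K ∧ y ∈ K) := by
  rcases hx with hx | hx <;> rcases hy with hy | hy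
  · exact .inl ⟨hx, hy⟩
  · rcases hxy with hxy | hxy
    · exact .inl ⟨hx, (mul_mem_cancel_left hx).mp hxy⟩
    · exact .inr ⟨(mul_mem_cancel_right hy).mp hxy, hy⟩
  · rcases hxy with hxy | hxy
    · exact .inl ⟨(mul_mem_cancel_right hy).mp hxy, hy⟩
    · exact .inr ⟨hx, (mul_mem_cancel_left hx).mp hxy⟩
  · exact .inr ⟨hx, hy⟩

open Classical in
noncomputable def invLeftCorrection (a b : G) : Circle :=
  if a ∈ H ∨ a ∈ K then (circleSqrt (ω a⁻¹ a b))⁻¹ else 1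

open Classical in
noncomputable def invRightCorrection (x y : G) : Circle :=
  if (x ∈ H ∨ x ∈ K) ∨ ¬(y ∈ H ∨ y ∈ K) then 1
  else if x * y ∈ H ∨ x * y ∈ K then ω x y y⁻¹
  else circleSqrt (ω x y y⁻¹)

variable {H K ω}

lemma apply_self_inv_self_eq_one (hH : IsTrivialOn3 ω H) (hK : IsTrivialOn3 ω K) {l : G}
    (hl : l ∈ H ∨ l ∈ K) : ω l l⁻¹ l = 1 := by
  rcases hl with h | h
  exacts [hH _ _ _ h (inv_mem h) h, hK _ _ _ h (inv_mem h) h]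

lemma isNormalized2_invLeftCorrection (hn : IsNormalized3 ω) :
    IsNormalized2 (invLeftCorrection H K ω) := fun g => by
  simp [invLeftCorrection, hn g⁻¹ g 1 (by simp), hn 1 1 g (by simp)]

lemma isTrivialOn2_invLeftCorrection {L : Subgroup G} (hL : IsTrivialOn3 ω L) :
    IsTrivialOn2 (invLeftCorrection H K ω) L := fun a b ha hb => by
  simp [invLeftCorrection, hL a⁻¹ a b (inv_mem ha) ha hb]

lemma twist_invLeftCorrection (hω : IsCocycle3 ω) (hn : IsNormalized3 ω)
    (hH : IsTrivialOn3 ω H) (hK : IsTrivialOn3 ω K) {l : G} (hl : l ∈ H ∨ l ∈ K) (g : G) :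
    twist (invLeftCorrection H K ω) ω l⁻¹ l g = 1 := by
  have hl' : l⁻¹ ∈ H ∨ l⁻¹ ∈ K := by simpa using hl
  have hlll := apply_self_inv_self_eq_one hH hK hl
  have h := hω.mul_inv_left_eq hn l g
  rw [hlll, one_mul] at h
  simp only [twist, coboundary2, invLeftCorrection, if_pos hl, if_pos hl', inv_inv,
    inv_mul_cancel, h, hlll, hn 1 1 g (by simp), circleSqrt_one, inv_one, ite_self, mul_one]
  rw [← mul_inv_rev, circleSqrt_mul_self, inv_mul_cancel]

lemma invRightCorrection_of_mem {x : G} (hx : x ∈ H ∨ x ∈ K) (y : G) :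
    invRightCorrection H K ω x y = 1 := by
  simp [invRightCorrection, hx]

lemma isNormalized2_invRightCorrection (hn : IsNormalized3 ω) :
    IsNormalized2 (invRightCorrection H K ω) := fun g => by
  refine ⟨?_, invRightCorrection_of_mem (.inl H.one_mem) g⟩
  simp [invRightCorrection, hn g 1 1 (by simp)]

lemma isTrivialOn2_invRightCorrection {L : Subgroup G} (hL : ∀ x ∈ L, x ∈ H ∨ x ∈ K) :
    IsTrivialOn2 (invRightCorrection H K ω) L :=
  fun _ _ ha _ => invRightCorrection_of_mem (hL _ ha) _

lemma coboundary2_invRightCorrection_inv_left {l : G} (hl : l ∈ H ∨ l ∈ K) (g : G) :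
    coboundary2 (invRightCorrection H K ω) l⁻¹ l g = 1 := by
  have hl' : l⁻¹ ∈ H ∨ l⁻¹ ∈ K := by simpa using hl
  simp [coboundary2, invRightCorrection_of_mem hl, invRightCorrection_of_mem hl',
    invRightCorrection_of_mem (.inl H.one_mem)]

lemma invRightCorrection_mul_invRightCorrection (hω : IsCocycle3 ω) (hn : IsNormalized3 ω)
    (hH : IsTrivialOn3 ω H) (hK : IsTrivialOn3 ω K) (x : G) {y : G} (hy : y ∈ H ∨ y ∈ K) :
    invRightCorrection H K ω x y * invRightCorrection H K ω (x * y) y⁻¹ = ω x y y⁻¹ := by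
  have hy' : y⁻¹ ∈ H ∨ y⁻¹ ∈ K := by simpa using hy
  have hsymm : ω (x * y) y⁻¹ y = ω x y y⁻¹ := by
    rw [hω.mul_inv_right_eq hn, apply_self_inv_self_eq_one hH hK hy, mul_one]
  by_cases hx : x ∈ H ∨ x ∈ K <;> by_cases hxy : x * y ∈ H ∨ x * y ∈ K
  · rcases mem_and_mem_of_mul_mem H K hx hy hxy with ⟨hxH, hyH⟩ | ⟨hxK, hyK⟩
    · simp [invRightCorrection, hx, hxy, hH x y y⁻¹ hxH hyH (inv_mem hyH)]
    · simp [invRightCorrection, hx, hxy, hK x y y⁻¹ hxK hyK (inv_mem hyK)]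
  · simp [invRightCorrection, hx, hxy, hy, hsymm]
  · simp [invRightCorrection, hx, hxy, hy]
  · simp only [invRightCorrection, hx, hxy, hy, hy', mul_inv_cancel_right, inv_inv, hsymm]
    simp [circleSqrt_mul_self]

lemma twist_invRightCorrection (hω : IsCocycle3 ω) (hn : IsNormalized3 ω)
    (hH : IsTrivialOn3 ω H) (hK : IsTrivialOn3 ω K) (g : G) {l : G} (hl : l ∈ H ∨ l ∈ K) :
    twist (invRightCorrection H K ω) ω g l l⁻¹ = 1 := by
  have h := invRightCorrection_mul_invRightCorrection hω hn hH hK g hl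
  simp only [twist, coboundary2, invRightCorrection_of_mem hl, mul_inv_cancel,
    ((isNormalized2_invRightCorrection hn) g).1, mul_one, one_mul]
  rw [← h]
  apply Additive.ofMul.injective
  simp only [ofMul_mul, ofMul_inv, ofMul_one]
  abel

end Corrections

theorem stmt_8_general {G : Type*} [Group G] (H K : Subgroup G)
    (ω : G → G → G → Circle)
    (hω : ∀ g1 g2 g3 g4 : G,
      ω g1 g2 g3 * ω g1 (g2 * g3) g4 * ω g2 g3 g4 =
        ω (g1 * g2) g3 g4 * ω g1 g2 (g3 * g4))
    (hnorm : ∀ g1 g2 g3 : G, (g1 = 1 ∨ g2 = 1 ∨ g3 = 1) → ω g1 g2 g3 = 1)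
    (hH : ∀ h1 h2 h3 : G, h1 ∈ H → h2 ∈ H → h3 ∈ H → ω h1 h2 h3 = 1)
    (hK : ∀ k1 k2 k3 : G, k1 ∈ K → k2 ∈ K → k3 ∈ K → ω k1 k2 k3 = 1) :
    ∃ φ : G → G → Circle,
      (∀ g : G, φ g 1 = 1 ∧ φ 1 g = 1) ∧
      (∀ h1 h2 h3 : G, h1 ∈ H → h2 ∈ H → h3 ∈ H → coboundary2 φ h1 h2 h3 = 1) ∧
      (∀ k1 k2 k3 : G, k1 ∈ K → k2 ∈ K → k3 ∈ K → coboundary2 φ k1 k2 k3 = 1) ∧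
      (∀ g1 g2 g3 : G, (g1 = 1 ∨ g2 = 1 ∨ g3 = 1) →
        coboundary2 φ g1 g2 g3 * ω g1 g2 g3 = 1) ∧
      (∀ h1 h2 h3 : G, h1 ∈ H → h2 ∈ H → h3 ∈ H →
        coboundary2 φ h1 h2 h3 * ω h1 h2 h3 = 1) ∧
      (∀ k1 k2 k3 : G, k1 ∈ K → k2 ∈ K → k3 ∈ K →
        coboundary2 φ k1 k2 k3 * ω k1 k2 k3 = 1) ∧
      (∀ g l : G, (l ∈ H ∨ l ∈ K) →
        coboundary2 φ g l l⁻¹ * ω g l l⁻¹ = 1 ∧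
        coboundary2 φ l⁻¹ l g * ω l⁻¹ l g = 1) := by
  set φ₁ := invLeftCorrection H K ω
  set ω₁ := twist φ₁ ω
  set φ₂ := invRightCorrection H K ω₁
  have hφ₁H : IsTrivialOn2 φ₁ H := isTrivialOn2_invLeftCorrection hH
  have hφ₁K : IsTrivialOn2 φ₁ K := isTrivialOn2_invLeftCorrection hK
  have hω₁ : IsCocycle3 ω₁ := isCocycle3_twist hω φ₁
  have hn₁ : IsNormalized3 ω₁ := isNormalized3_twist (isNormalized2_invLeftCorrection hnorm) hnorm
  have hH₁ : IsTrivialOn3 ω₁ H := isTrivialOn3_twist hφ₁H hH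
  have hK₁ : IsTrivialOn3 ω₁ K := isTrivialOn3_twist hφ₁K hK
  have hφH : IsTrivialOn2 (φ₁ * φ₂) H := hφ₁H.mul (isTrivialOn2_invRightCorrection fun _ => .inl)
  have hφK : IsTrivialOn2 (φ₁ * φ₂) K := hφ₁K.mul (isTrivialOn2_invRightCorrection fun _ => .inr)
  have hφ : IsNormalized2 (φ₁ * φ₂) :=
    (isNormalized2_invLeftCorrection hnorm).mul (isNormalized2_invRightCorrection hn₁)
  have htwist : twist (φ₁ * φ₂) ω = twist φ₂ ω₁ := twist_mul φ₁ φ₂ ω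
  refine ⟨φ₁ * φ₂, hφ, hφH.coboundary2_eq_one, hφK.coboundary2_eq_one,
    isNormalized3_twist hφ hnorm, isTrivialOn3_twist hφH hH, isTrivialOn3_twist hφK hK,
    fun g l hl => ⟨?_, ?_⟩⟩
  · change twist (φ₁ * φ₂) ω g l l⁻¹ = 1
    rw [htwist]
    exact twist_invRightCorrection hω₁ hn₁ hH₁ hK₁ g hl
  · change twist (φ₁ * φ₂) ω l⁻¹ l g = 1
    rw [htwist, twist, coboundary2_invRightCorrection_inv_left hl, one_mul]
    exact twist_invLeftCorrection hω hnorm hH hK hl g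

/-- Lemma 4.1: a normalized 3-cocycle `ω` of `G = ⟨H, K⟩` which is trivial on `H³` and
on `K³` is coboundarily equivalent, via a normalized 2-cochain whose coboundary is
trivial on `H³` and `K³`, to a normalized 3-cocycle `ω'` which is still trivial on `H³`
and `K³` and moreover satisfies `ω'(g,l,l⁻¹) = 1 = ω'(l⁻¹,l,g)` for all
`g ∈ G`, `l ∈ H ∪ K`. -/
theorem stmt_8 {G : Type*} [Group G] (H K : Subgroup G)
    (hGen : Subgroup.closure ((H : Set G) ∪ (K : Set G)) = ⊤)
    (ω : G → G → G → Circle)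
    (hω : ∀ g1 g2 g3 g4 : G,
      ω g1 g2 g3 * ω g1 (g2 * g3) g4 * ω g2 g3 g4 =
        ω (g1 * g2) g3 g4 * ω g1 g2 (g3 * g4))
    (hnorm : ∀ g1 g2 g3 : G, (g1 = 1 ∨ g2 = 1 ∨ g3 = 1) → ω g1 g2 g3 = 1)
    (hH : ∀ h1 h2 h3 : G, h1 ∈ H → h2 ∈ H → h3 ∈ H → ω h1 h2 h3 = 1)
    (hK : ∀ k1 k2 k3 : G, k1 ∈ K → k2 ∈ K → k3 ∈ K → ω k1 k2 k3 = 1) :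
    ∃ φ : G → G → Circle,
      (∀ g : G, φ g 1 = 1 ∧ φ 1 g = 1) ∧
      (∀ h1 h2 h3 : G, h1 ∈ H → h2 ∈ H → h3 ∈ H → coboundary2 φ h1 h2 h3 = 1) ∧
      (∀ k1 k2 k3 : G, k1 ∈ K → k2 ∈ K → k3 ∈ K → coboundary2 φ k1 k2 k3 = 1) ∧
      (∀ g1 g2 g3 : G, (g1 = 1 ∨ g2 = 1 ∨ g3 = 1) →
        coboundary2 φ g1 g2 g3 * ω g1 g2 g3 = 1) ∧
      (∀ h1 h2 h3 : G, h1 ∈ H → h2 ∈ H → h3 ∈ H →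
        coboundary2 φ h1 h2 h3 * ω h1 h2 h3 = 1) ∧
      (∀ k1 k2 k3 : G, k1 ∈ K → k2 ∈ K → k3 ∈ K →
        coboundary2 φ k1 k2 k3 * ω k1 k2 k3 = 1) ∧
      (∀ g l : G, (l ∈ H ∨ l ∈ K) →
        coboundary2 φ g l l⁻¹ * ω g l l⁻¹ = 1 ∧
        coboundary2 φ l⁻¹ l g * ω l⁻¹ l g = 1) :=
  stmt_8_general H K ω hω hnorm hH hK
end

section
/- With the tube algebra multiplication $a(g_2,t,g_3)\cdot a(g_1,s,g_2) = [\omega(g_1,s,t)\overline{\omega}(s,g_2,t)\omega(s,t,g_3)]\, a(g_1,st,g_3)$ and the involution $(a(g_1,s,g_2))^{\#} = [\overline{\omega}(g_1,s,s^{-1})\,\omega(s,g_2,s^{-1})\,\overline{\omega}(s,s^{-1},g_1)]\, a(g_2,s^{-1},g_1)$, the map $\#$ is an anti-multiplicative involution: $(x \cdot y)^{\#} = y^{\#} \cdot x^{\#}$ and $(x^{\#})^{\#} = x$, assuming $\omega$ is a normalized 3-cocycle. -/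
/-- Basis of the tube algebra: triples `(g₁, s, g₂)` with `g₁ s = s g₂`. -/
def TubeBasis (G : Type*) [Group G] : Type _ :=
  {p : G × G × G // p.1 * p.2.1 = p.2.1 * p.2.2}

/-- The flipped basis element `a(g₂, s⁻¹, g₁)` associated to `a(g₁, s, g₂)`. -/
def TubeBasis.flip {G : Type*} [Group G] (p : TubeBasis G) : TubeBasis G :=
  ⟨(p.1.2.2, p.1.2.1⁻¹, p.1.1), by
    have h : p.1.2.1⁻¹ * (p.1.1 * p.1.2.1) = p.1.2.2 := by
      rw [p.2]; group
    rw [← h]; group⟩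

/-- Product of basis elements: `a(g₂,t,g₃) ⬝ a(g₁,s,g₂) =
ω(g₁,s,t) ω̄(s,g₂,t) ω(s,t,g₃) a(g₁,st,g₃)`; `p` is the left factor `a(g₂,t,g₃)`
and `q` the right factor `a(g₁,s,g₂)`. -/
noncomputable def tubeMulBasis {G : Type*} [Group G] [DecidableEq G]
    (ω : G → G → G → Circle) (p q : TubeBasis G) : TubeBasis G →₀ ℂ :=
  if h : q.1.2.2 = p.1.1 then
    Finsupp.single
      (⟨(q.1.1, q.1.2.1 * p.1.2.1, p.1.2.2), by
        have r1 := q.2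
        have r2 := p.2
        rw [h] at r1
        calc q.1.1 * (q.1.2.1 * p.1.2.1) = q.1.1 * q.1.2.1 * p.1.2.1 := by group
          _ = q.1.2.1 * p.1.1 * p.1.2.1 := by rw [r1]
          _ = q.1.2.1 * (p.1.1 * p.1.2.1) := by group
          _ = q.1.2.1 * (p.1.2.1 * p.1.2.2) := by rw [r2]
          _ = q.1.2.1 * p.1.2.1 * p.1.2.2 := by group⟩ : TubeBasis G)
      ((ω q.1.1 q.1.2.1 p.1.2.1 * (ω q.1.2.1 q.1.2.2 p.1.2.1)⁻¹ *
          ω q.1.2.1 p.1.2.1 p.1.2.2 : Circle) : ℂ)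
  else 0

/-- The tube algebra multiplication (first argument is the left factor). -/
noncomputable def tubeMul {G : Type*} [Group G] [DecidableEq G]
    (ω : G → G → G → Circle) (x y : TubeBasis G →₀ ℂ) : TubeBasis G →₀ ℂ :=
  Finsupp.sum x fun p a => Finsupp.sum y fun q b => (a * b) • tubeMulBasis ω p q

/-- The involution `#`: `a(g₁,s,g₂)^# = ω̄(g₁,s,s⁻¹) ω(s,g₂,s⁻¹) ω̄(s,s⁻¹,g₁)
a(g₂,s⁻¹,g₁)`, extended conjugate-linearly. -/
noncomputable def tubeHash {G : Type*} [Group G] [DecidableEq G]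
    (ω : G → G → G → Circle) (x : TubeBasis G →₀ ℂ) : TubeBasis G →₀ ℂ :=
  Finsupp.sum x fun p a =>
    Finsupp.single p.flip
      ((starRingEnd ℂ) a *
        (((ω p.1.1 p.1.2.1 p.1.2.1⁻¹)⁻¹ * ω p.1.2.1 p.1.2.2 p.1.2.1⁻¹ *
            (ω p.1.2.1 p.1.2.1⁻¹ p.1.1)⁻¹ : Circle) : ℂ))

/-!
Since `#` is conjugate-linear and the product is bilinear, both identities reduce to basis
elements, where they become identities between phases in `S¹`: `# ∘ #` multiplies `a(g,s,h)` by
`c(g,s,h)⁻¹ c(h,s⁻¹,g)`, where `c` is the phase of `#`, and anti-multiplicativity compares the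
phases of `(a(g₂,t,g₃) ⬝ a(g₁,s,g₂))^#` and `a(g₁,s,g₂)^# ⬝ a(g₂,t,g₃)^#`. After substituting
`h = s⁻¹ g s` (resp. `g₂ = s⁻¹ g₁ s`, `g₃ = t⁻¹ g₂ t`), every argument of `ω` is a reduced word
in free letters, and each phase identity is a signed sum of four (resp. eight) instances of the
cocycle condition, read in `Additive A`, up to values that vanish by normalization.
-/

section Cocycle

variable {G A : Type*} [Group G] [CommGroup A]

def IsNormalizedThreeCocycle (ω : G → G → G → A) : Prop :=
  (∀ g₁ g₂ g₃ g₄ : G, ω g₁ g₂ g₃ * ω g₁ (g₂ * g₃) g₄ * ω g₂ g₃ g₄ =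
      ω (g₁ * g₂) g₃ g₄ * ω g₁ g₂ (g₃ * g₄)) ∧
    ∀ g₁ g₂ g₃ : G, (g₁ = 1 ∨ g₂ = 1 ∨ g₃ = 1) → ω g₁ g₂ g₃ = 1

/-- The phase in `a(g, s, h)^# = hashCoeff ω g s h • a(h, s⁻¹, g)`. -/
def hashCoeff (ω : G → G → G → A) (g s h : G) : A :=
  (ω g s s⁻¹)⁻¹ * ω s h s⁻¹ * (ω s s⁻¹ g)⁻¹

/-- The phase in `a(g₂, t, g₃) ⬝ a(g₁, s, g₂) = mulCoeff ω g₁ s g₂ t g₃ • a(g₁, s t, g₃)`. -/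
def mulCoeff (ω : G → G → G → A) (g₁ s g₂ t g₃ : G) : A :=
  ω g₁ s t * (ω s g₂ t)⁻¹ * ω s t g₃

namespace IsNormalizedThreeCocycle

variable {ω : G → G → G → A}

theorem ofMul_cocycle (hω : IsNormalizedThreeCocycle ω) (g₁ g₂ g₃ g₄ : G) :
    Additive.ofMul (ω g₁ g₂ g₃) + Additive.ofMul (ω g₁ (g₂ * g₃) g₄) +
        Additive.ofMul (ω g₂ g₃ g₄) =
      Additive.ofMul (ω (g₁ * g₂) g₃ g₄) + Additive.ofMul (ω g₁ g₂ (g₃ * g₄)) := by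
  simpa only [← ofMul_mul] using congrArg Additive.ofMul (hω.1 g₁ g₂ g₃ g₄)

theorem one_left (hω : IsNormalizedThreeCocycle ω) (g h : G) : ω 1 g h = 1 :=
  hω.2 _ _ _ (.inl rfl)

theorem one_mid (hω : IsNormalizedThreeCocycle ω) (g h : G) : ω g 1 h = 1 :=
  hω.2 _ _ _ (.inr (.inl rfl))

theorem one_right (hω : IsNormalizedThreeCocycle ω) (g h : G) : ω g h 1 = 1 :=
  hω.2 _ _ _ (.inr (.inr rfl))

theorem hashCoeff_flip (hω : IsNormalizedThreeCocycle ω) {g s h : G} (hgs : g * s = s * h) :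
    hashCoeff ω h s⁻¹ g = hashCoeff ω g s h := by
  obtain rfl : h = s⁻¹ * g * s := by rw [mul_assoc, hgs, inv_mul_cancel_left]
  apply Additive.ofMul.injective
  simp only [hashCoeff, ofMul_mul, ofMul_inv]
  linear_combination (norm := skip)
    hω.ofMul_cocycle g s s⁻¹ s - hω.ofMul_cocycle s (s⁻¹ * g * s) s⁻¹ s
      + hω.ofMul_cocycle s s⁻¹ g s - hω.ofMul_cocycle s s⁻¹ s (s⁻¹ * g * s)
  simp only [mul_assoc, mul_inv_cancel_left, inv_inv, mul_one, mul_inv_cancel, inv_mul_cancel,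
    hω.one_left, hω.one_mid, hω.one_right, ofMul_one]
  abel

theorem mulCoeff_inv_mul_hashCoeff (hω : IsNormalizedThreeCocycle ω) {g₁ g₂ g₃ s t : G}
    (hs : g₁ * s = s * g₂) (ht : g₂ * t = t * g₃) :
    (mulCoeff ω g₁ s g₂ t g₃)⁻¹ * hashCoeff ω g₁ (s * t) g₃ =
      hashCoeff ω g₁ s g₂ * hashCoeff ω g₂ t g₃ * mulCoeff ω g₃ t⁻¹ g₂ s⁻¹ g₁ := by
  obtain rfl : g₃ = t⁻¹ * g₂ * t := by rw [mul_assoc, ht, inv_mul_cancel_left]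
  obtain rfl : g₂ = s⁻¹ * g₁ * s := by rw [mul_assoc, hs, inv_mul_cancel_left]
  apply Additive.ofMul.injective
  simp only [hashCoeff, mulCoeff, ofMul_mul, ofMul_inv]
  linear_combination (norm := skip)
    -hω.ofMul_cocycle g₁ s t (s * t)⁻¹ + hω.ofMul_cocycle (s⁻¹ * g₁ * s) t t⁻¹ s⁻¹
      + hω.ofMul_cocycle s (s⁻¹ * g₁ * s) t (s * t)⁻¹
      - hω.ofMul_cocycle s t (t⁻¹ * (s⁻¹ * g₁ * s) * t) (s * t)⁻¹
      + hω.ofMul_cocycle s t (s * t)⁻¹ g₁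
      - hω.ofMul_cocycle t (t⁻¹ * (s⁻¹ * g₁ * s) * t) t⁻¹ s⁻¹
      + hω.ofMul_cocycle t t⁻¹ (s⁻¹ * g₁ * s) s⁻¹ - hω.ofMul_cocycle t t⁻¹ s⁻¹ g₁
  simp only [mul_assoc, mul_inv_cancel_left, mul_inv_rev, mul_one, mul_inv_cancel,
    hω.one_left, hω.one_mid, ofMul_one]
  abel

end IsNormalizedThreeCocycle

end Cocycle

namespace TubeBasis

variable {G : Type*} [Group G]

@[simp]
theorem flip_flip (p : TubeBasis G) : p.flip.flip = p :=
  Subtype.ext (by simp [flip])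

end TubeBasis

section TubeAlgebra

variable {G : Type*} [Group G] [DecidableEq G] {ω : G → G → G → Circle}

theorem tubeMul_zero_left (y : TubeBasis G →₀ ℂ) : tubeMul ω 0 y = 0 :=
  Finsupp.sum_zero_index

theorem tubeMul_zero_right (x : TubeBasis G →₀ ℂ) : tubeMul ω x 0 = 0 := by
  simp [tubeMul]

theorem tubeMul_add_left (x₁ x₂ y : TubeBasis G →₀ ℂ) :
    tubeMul ω (x₁ + x₂) y = tubeMul ω x₁ y + tubeMul ω x₂ y :=
  Finsupp.sum_add_index' (fun _ => by simp) fun _ _ _ => by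
    simp only [add_mul, add_smul, Finsupp.sum_add]

theorem tubeMul_add_right (x y₁ y₂ : TubeBasis G →₀ ℂ) :
    tubeMul ω x (y₁ + y₂) = tubeMul ω x y₁ + tubeMul ω x y₂ := by
  simp only [tubeMul, ← Finsupp.sum_add]
  refine Finsupp.sum_congr fun _ _ => Finsupp.sum_add_index' (fun _ => by simp) fun _ _ _ => ?_
  rw [mul_add, add_smul]

theorem tubeMul_single_single (p q : TubeBasis G) (a b : ℂ) :
    tubeMul ω (Finsupp.single p a) (Finsupp.single q b) = (a * b) • tubeMulBasis ω p q := by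
  simp [tubeMul]

theorem tubeHash_zero : tubeHash ω 0 = 0 :=
  Finsupp.sum_zero_index

theorem tubeHash_add (x y : TubeBasis G →₀ ℂ) :
    tubeHash ω (x + y) = tubeHash ω x + tubeHash ω y :=
  Finsupp.sum_add_index' (fun _ => by simp) fun _ _ _ => by
    rw [map_add, add_mul, Finsupp.single_add]

theorem tubeHash_single (p : TubeBasis G) (a : ℂ) :
    tubeHash ω (Finsupp.single p a) =
      Finsupp.single p.flip (starRingEnd ℂ a * hashCoeff ω p.1.1 p.1.2.1 p.1.2.2) :=
  Finsupp.sum_single_index (by simp)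

theorem tubeHash_smul (c : ℂ) (x : TubeBasis G →₀ ℂ) :
    tubeHash ω (c • x) = starRingEnd ℂ c • tubeHash ω x := by
  simp only [tubeHash, Finsupp.smul_sum, Finsupp.smul_single, smul_eq_mul]
  rw [Finsupp.sum_smul_index' (by simp)]
  simp only [smul_eq_mul, map_mul, mul_assoc]

theorem tubeHash_tubeMulBasis (hω : IsNormalizedThreeCocycle ω) (p q : TubeBasis G) :
    tubeHash ω (tubeMulBasis ω p q) =
      ((hashCoeff ω q.1.1 q.1.2.1 q.1.2.2 * hashCoeff ω p.1.1 p.1.2.1 p.1.2.2 : Circle) : ℂ) •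
        tubeMulBasis ω q.flip p.flip := by
  by_cases h : q.1.2.2 = p.1.1
  · have key := hω.mulCoeff_inv_mul_hashCoeff q.2 (h ▸ p.2)
    rw [h] at key
    simp only [tubeMulBasis, TubeBasis.flip, h, ↓reduceDIte]
    refine (tubeHash_single _ _).trans (.trans ?_ (Finsupp.smul_single _ _ _).symm)
    congr 1
    · exact Subtype.ext (by simp [TubeBasis.flip])
    · rw [← Circle.coe_inv_eq_conj, smul_eq_mul, ← Circle.coe_mul, ← Circle.coe_mul]
      exact congrArg _ key
  · simp only [tubeMulBasis, TubeBasis.flip, h, Ne.symm h, ↓reduceDIte, tubeHash_zero, smul_zero]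

theorem tubeHash_tubeMul_single_single (hω : IsNormalizedThreeCocycle ω) (p q : TubeBasis G)
    (a b : ℂ) :
    tubeHash ω (tubeMul ω (Finsupp.single p a) (Finsupp.single q b)) =
      tubeMul ω (tubeHash ω (Finsupp.single q b)) (tubeHash ω (Finsupp.single p a)) := by
  rw [tubeMul_single_single, tubeHash_smul, tubeHash_tubeMulBasis hω, tubeHash_single,
    tubeHash_single, tubeMul_single_single, smul_smul, Circle.coe_mul, map_mul]
  congr 1
  ring

theorem tubeHash_tubeHash_single (hω : IsNormalizedThreeCocycle ω) (p : TubeBasis G) (a : ℂ) :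
    tubeHash ω (tubeHash ω (Finsupp.single p a)) = Finsupp.single p a := by
  rw [tubeHash_single, tubeHash_single, TubeBasis.flip_flip, map_mul, Complex.conj_conj,
    ← Circle.coe_inv_eq_conj, mul_assoc, ← Circle.coe_mul]
  have hflip : hashCoeff ω p.flip.1.1 p.flip.1.2.1 p.flip.1.2.2 =
      hashCoeff ω p.1.1 p.1.2.1 p.1.2.2 := hω.hashCoeff_flip p.2
  rw [hflip, inv_mul_cancel, Circle.coe_one, mul_one]

end TubeAlgebra

/-- For a normalized 3-cocycle `ω`, the map `#` is an anti-multiplicative involution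
of the tube algebra. -/
theorem stmt_11 {G : Type*} [Group G] [DecidableEq G] (ω : G → G → G → Circle)
    (hω : ∀ g1 g2 g3 g4 : G,
      ω g1 g2 g3 * ω g1 (g2 * g3) g4 * ω g2 g3 g4 =
        ω (g1 * g2) g3 g4 * ω g1 g2 (g3 * g4))
    (hnorm : ∀ g1 g2 g3 : G, (g1 = 1 ∨ g2 = 1 ∨ g3 = 1) → ω g1 g2 g3 = 1) :
    (∀ x y : TubeBasis G →₀ ℂ,
        tubeHash ω (tubeMul ω x y) = tubeMul ω (tubeHash ω y) (tubeHash ω x)) ∧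
    (∀ x : TubeBasis G →₀ ℂ, tubeHash ω (tubeHash ω x) = x) := by
  have hcoc : IsNormalizedThreeCocycle ω := ⟨hω, hnorm⟩
  refine ⟨fun x y => ?_, fun x => ?_⟩
  · induction x using Finsupp.induction_linear with
    | zero => rw [tubeMul_zero_left, tubeHash_zero, tubeMul_zero_right]
    | add x₁ x₂ h₁ h₂ =>
      rw [tubeMul_add_left, tubeHash_add, h₁, h₂, tubeHash_add, tubeMul_add_right]
    | single p a =>
      induction y using Finsupp.induction_linear with
      | zero => rw [tubeMul_zero_right, tubeHash_zero, tubeMul_zero_left]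
      | add y₁ y₂ h₁ h₂ =>
        rw [tubeMul_add_right, tubeHash_add, h₁, h₂, tubeHash_add, tubeMul_add_left]
      | single q b => exact tubeHash_tubeMul_single_single hcoc p q a b
  · induction x using Finsupp.induction_linear with
    | zero => rw [tubeHash_zero, tubeHash_zero]
    | add x₁ x₂ h₁ h₂ => rw [tubeHash_add, tubeHash_add, h₁, h₂]
    | single p a => exact tubeHash_tubeHash_single hcoc p a
end
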